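/- If q = 1 and p > 1, then the extended Lorentz cone L = {(x,u) ∈ ℝ^p × ℝ : x ≥ |u|e} equals cone{(e,1), (e,−1), (e¹,0), …, (e^p,0)}, and no set of fewer than p + 2 vectors generates L (so the minimal number of generators of L is p + 2). If q = 1 and p = 1, then L = cone{(1,1), (1,−1)}. -/

import Mathlib

/-!
The set `L` is a pointed cone, and every `(x, u) ∈ L` splits as
`((|u| + u)/2) (e, 1) + ((|u| - u)/2) (e, -1) + ∑ᵢ (xᵢ - |u|) (eⁱ, 0)` with nonnegative
coefficients. For `p > 1` each of these `p + 2` generators spans a one-dimensional face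
(an extreme ray) of `L`, and the rays are pairwise distinct. If a finite family generates a cone,
writing a nonzero point of an extreme ray as a nonnegative combination of the family puts some
nonzero member of the family on that ray; so a generating family has at least one member per
extreme ray.
-/

/-- The extended Lorentz cone with `q = 1`:
`L = {(x,u) ∈ ℝ^p × ℝ : x ≥ |u|e}`. -/
def extendedLorentzCone1 (p : ℕ) : Set (EuclideanSpace ℝ (Fin p) × ℝ) :=
  {z | ∀ i, |z.2| ≤ z.1 i}

/-- The cone generated by finitely many vectors `v¹,…,v^k`. -/
def coneGen {V : Type*} [AddCommMonoid V] [Module ℝ V] {k : ℕ}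
    (v : Fin k → V) : Set V :=
  {z | ∃ lam : Fin k → ℝ, (∀ i, 0 ≤ lam i) ∧ z = ∑ i, lam i • v i}

/-- The all-ones vector `e ∈ ℝ^p`. -/
noncomputable def onesVec (p : ℕ) : EuclideanSpace ℝ (Fin p) := WithLp.toLp 2 (fun _ => 1)

open PointedCone Set Function

section ConeGen

variable {M : Type*} [AddCommGroup M] [Module ℝ M]

theorem coneGen_eq_hull {k : ℕ} (v : Fin k → M) : coneGen v = hull ℝ (range v) := by
  ext z
  rw [SetLike.mem_coe, Submodule.mem_span_range_iff_exists_fun]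
  constructor
  · rintro ⟨c, hc, rfl⟩
    exact ⟨fun i => ⟨c i, hc i⟩, rfl⟩
  · rintro ⟨c, rfl⟩
    exact ⟨fun i => c i, fun i => (c i).2, rfl⟩

theorem mem_hull_singleton {v x : M} : x ∈ hull ℝ {v} ↔ ∃ t : ℝ, 0 ≤ t ∧ t • v = x := by
  rw [Submodule.mem_span_singleton]
  constructor
  · rintro ⟨c, rfl⟩
    exact ⟨c, c.2, rfl⟩
  · rintro ⟨t, ht, rfl⟩
    exact ⟨⟨t, ht⟩, rfl⟩

theorem hull_singleton_smul {t : ℝ} (ht : 0 < t) (v : M) : hull ℝ {t • v} = hull ℝ {v} := by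
  have hunit : IsUnit (⟨t, ht.le⟩ : {c : ℝ // 0 ≤ c}) :=
    Ne.isUnit (by simpa [← Subtype.coe_ne_coe] using ht.ne')
  exact Submodule.span_singleton_smul_eq hunit v

theorem exists_hull_singleton_eq_of_isFaceOf {k : ℕ} {w : Fin k → M} {v : M} (hv : v ≠ 0)
    (hface : (hull ℝ {v}).IsFaceOf (hull ℝ (range w))) : ∃ i, hull ℝ {w i} = hull ℝ {v} := by
  have hv_mem : v ∈ coneGen w := by
    rw [coneGen_eq_hull]
    exact hface.le (subset_hull rfl)
  obtain ⟨c, hc, hsum⟩ := hv_mem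
  obtain ⟨i, hi⟩ : ∃ i, c i • w i ≠ 0 := by
    by_contra! h
    exact hv (by simp [hsum, h])
  have hci : 0 < c i := (hc i).lt_of_ne fun h => hi (by simp [← h])
  have hwi : w i ∈ hull ℝ {v} :=
    hface.mem_of_sum_smul_mem (fun j => subset_hull ⟨j, rfl⟩) hc (hsum ▸ subset_hull rfl) i hci
  obtain ⟨t, ht, htv⟩ := mem_hull_singleton.1 hwi
  have htpos : 0 < t := ht.lt_of_ne fun h => hi (by simp [← htv, ← h])
  exact ⟨i, htv ▸ hull_singleton_smul htpos v⟩

theorem card_le_of_isFaceOf_hull_singleton {ι : Type*} [Fintype ι] {k : ℕ} {w : Fin k → M}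
    {v : ι → M} (hv : ∀ j, v j ≠ 0) (hface : ∀ j, (hull ℝ {v j}).IsFaceOf (hull ℝ (range w)))
    (hinj : Injective fun j => hull ℝ {v j}) : Fintype.card ι ≤ k := by
  choose F hF using fun j => exists_hull_singleton_eq_of_isFaceOf (hv j) (hface j)
  have hF_inj : Injective F := fun j j' h => hinj ((hF j).symm.trans (h ▸ hF j'))
  simpa using Fintype.card_le_of_injective F hF_inj

end ConeGen

section LorentzCone

variable (p : ℕ)

def lorentzCone : PointedCone ℝ (EuclideanSpace ℝ (Fin p) × ℝ) :=
  .ofConeComb (extendedLorentzCone1 p) ⟨0, fun i => by simp⟩ fun x hx y hy a ha b hb i =>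
    calc |a * x.2 + b * y.2| ≤ a * |x.2| + b * |y.2| := by
          simpa [abs_mul, abs_of_nonneg ha, abs_of_nonneg hb] using abs_add_le (a * x.2) (b * y.2)
      _ ≤ a * x.1 i + b * y.1 i := by gcongr; exacts [hx i, hy i]
      _ = (a • x + b • y).1 i := by simp

theorem coe_lorentzCone : (lorentzCone p : Set (EuclideanSpace ℝ (Fin p) × ℝ)) =
    extendedLorentzCone1 p := rfl

noncomputable def lorentzGenerators : Fin (2 + p) → EuclideanSpace ℝ (Fin p) × ℝ :=
  Fin.append ![(onesVec p, 1), (onesVec p, -1)] fun i => (EuclideanSpace.single i 1, 0)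

theorem hull_pair_le_lorentzCone :
    hull ℝ {(onesVec p, (1 : ℝ)), (onesVec p, -1)} ≤ lorentzCone p := by
  rw [Submodule.span_le, insert_subset_iff, singleton_subset_iff]
  constructor <;> intro i <;> simp [onesVec]

theorem mk_smul_onesVec_mem_hull_pair {m u : ℝ} (h : |u| ≤ m) :
    (m • onesVec p, u) ∈ hull ℝ {(onesVec p, (1 : ℝ)), (onesVec p, -1)} := by
  have hu := abs_le.1 h
  have hdecomp : (m • onesVec p, u) =
      ((m + u) / 2) • (onesVec p, (1 : ℝ)) + ((m - u) / 2) • (onesVec p, (-1 : ℝ)) := by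
    ext <;> simp <;> ring
  rw [hdecomp]
  exact add_mem (smul_mem _ (by linarith) (subset_hull (by simp)))
    (smul_mem _ (by linarith) (subset_hull (by simp)))

theorem lorentzGenerators_castAdd (j : Fin 2) :
    lorentzGenerators p (Fin.castAdd p j) = ![(onesVec p, 1), (onesVec p, -1)] j :=
  Fin.append_left _ _ j

theorem lorentzGenerators_natAdd (i : Fin p) :
    lorentzGenerators p (Fin.natAdd 2 i) = (EuclideanSpace.single i 1, 0) :=
  Fin.append_right _ _ i

theorem single_mem_lorentzCone (i : Fin p) :
    ((EuclideanSpace.single i 1 : EuclideanSpace ℝ (Fin p)), (0 : ℝ)) ∈ lorentzCone p := by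
  intro j
  simp [apply_ite]

theorem lorentzCone_eq_hull_lorentzGenerators :
    lorentzCone p = hull ℝ (range (lorentzGenerators p)) := by
  apply le_antisymm
  · rintro ⟨x, u⟩ hz
    have hdecomp : (x, u) = (|u| • onesVec p, u) +
        ∑ i, (x i - |u|) • ((EuclideanSpace.single i 1 : EuclideanSpace ℝ (Fin p)), (0 : ℝ)) := by
      ext i <;> simp [onesVec, Prod.fst_sum, Prod.snd_sum, WithLp.ofLp_sum, Finset.sum_apply,
        Pi.single_apply]
    have hpair : {(onesVec p, (1 : ℝ)), (onesVec p, -1)} ⊆ range (lorentzGenerators p) := by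
      rw [insert_subset_iff, singleton_subset_iff]
      exact ⟨⟨Fin.castAdd p 0, lorentzGenerators_castAdd p 0⟩,
        ⟨Fin.castAdd p 1, lorentzGenerators_castAdd p 1⟩⟩
    rw [hdecomp]
    exact add_mem (Submodule.span_mono hpair (mk_smul_onesVec_mem_hull_pair p le_rfl))
      (sum_mem fun i _ => smul_mem _ (sub_nonneg.2 (hz i))
        (subset_hull ⟨_, lorentzGenerators_natAdd p i⟩))
  · rw [Submodule.span_le]
    rintro _ ⟨j, rfl⟩
    induction j using Fin.addCases with
    | left j =>
      rw [lorentzGenerators_castAdd]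
      fin_cases j <;> exact hull_pair_le_lorentzCone p (subset_hull (by simp))
    | right i => rw [lorentzGenerators_natAdd]; exact single_mem_lorentzCone p i

theorem lorentzCone_one_eq_hull_pair :
    lorentzCone 1 = hull ℝ {(onesVec 1, (1 : ℝ)), (onesVec 1, -1)} := by
  refine le_antisymm (fun z hz => ?_) (hull_pair_le_lorentzCone 1)
  have hz1 : z.1 = z.1 0 • onesVec 1 := by
    ext i
    fin_cases i
    simp [onesVec]
  rw [← Prod.mk.eta (p := z), hz1]
  exact mk_smul_onesVec_mem_hull_pair 1 (hz 0)

end LorentzCone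

section Faces

variable {p : ℕ}

theorem isFaceOf_hull_onesVec [NeZero p] {ε : ℝ} (hε : |ε| = 1) :
    (hull ℝ {(onesVec p, ε)}).IsFaceOf (lorentzCone p) := by
  apply IsFaceOf.of_mem_of_add_mem_left
  · rw [Submodule.span_le, singleton_subset_iff]
    intro i
    simp [onesVec, hε]
  rintro ⟨x, s⟩ ⟨y, t⟩ hx hy hxy
  obtain ⟨c, -, hc⟩ := mem_hull_singleton.1 hxy
  have hεε : ε * ε = 1 := by rw [← abs_mul_abs_self, hε, one_mul]
  have hst : ε * s + ε * t = c := by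
    have : c * ε = s + t := congrArg Prod.snd hc
    linear_combination ε * this.symm + c * hεε
  have hs := le_abs_self (ε * s)
  have ht := le_abs_self (ε * t)
  rw [abs_mul, hε, one_mul] at hs ht
  have hx_eq : ∀ i, x i = ε * s := fun i => by
    have : c = x i + y i := by simpa [onesVec] using congrArg (fun z => z.1 i) hc
    linarith [hx i, hy i]
  refine mem_hull_singleton.2 ⟨ε * s, hx_eq 0 ▸ (abs_nonneg s).trans (hx 0), ?_⟩
  ext i
  · simp [onesVec, hx_eq i]
  · show ε * s * ε = s
    linear_combination s * hεε

theorem isFaceOf_hull_single (hp : 1 < p) (i : Fin p) :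
    (hull ℝ {((EuclideanSpace.single i 1 : EuclideanSpace ℝ (Fin p)), (0 : ℝ))}).IsFaceOf
      (lorentzCone p) := by
  apply IsFaceOf.of_mem_of_add_mem_left
  · rw [Submodule.span_le, singleton_subset_iff]
    exact single_mem_lorentzCone p i
  rintro ⟨x, s⟩ ⟨y, t⟩ hx hy hxy
  obtain ⟨c, -, hc⟩ := mem_hull_singleton.1 hxy
  have hx_off : ∀ j ≠ i, x j = 0 := fun j hj => by
    have : 0 = x j + y j := by simpa [hj] using congrArg (fun z => z.1 j) hc
    linarith [hx j, hy j, abs_nonneg s, abs_nonneg t]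
  have : Nontrivial (Fin p) := Fin.nontrivial_iff_two_le.2 hp
  obtain ⟨j, hj⟩ := exists_ne i
  have hs : s = 0 := abs_nonpos_iff.1 (hx_off j hj ▸ hx j)
  refine mem_hull_singleton.2 ⟨x i, (abs_nonneg s).trans (hx i), ?_⟩
  ext j
  · by_cases hj : j = i
    · simp [hj]
    · simp [hj, hx_off j hj]
  · simp [hs]

theorem isFaceOf_hull_lorentzGenerators (hp : 1 < p) (j : Fin (2 + p)) :
    (hull ℝ {lorentzGenerators p j}).IsFaceOf (lorentzCone p) := by
  have : NeZero p := ⟨by omega⟩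
  induction j using Fin.addCases with
  | left j =>
    rw [lorentzGenerators_castAdd]
    fin_cases j <;> exact isFaceOf_hull_onesVec (by simp)
  | right i =>
    rw [lorentzGenerators_natAdd]
    exact isFaceOf_hull_single hp i

theorem lorentzGenerators_ne_zero (j : Fin (2 + p)) : lorentzGenerators p j ≠ 0 := by
  induction j using Fin.addCases with
  | left j =>
    rw [lorentzGenerators_castAdd]
    fin_cases j <;> simp [Prod.ext_iff]
  | right i =>
    rw [lorentzGenerators_natAdd]
    simp [Prod.ext_iff]

theorem eq_of_smul_lorentzGenerators_eq {j j' : Fin (2 + p)} {a : ℝ} (ha : 0 ≤ a)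
    (h : a • lorentzGenerators p j' = lorentzGenerators p j) : j = j' := by
  induction j using Fin.addCases with
  | left j =>
    induction j' using Fin.addCases with
    | left j' =>
      rw [lorentzGenerators_castAdd, lorentzGenerators_castAdd] at h
      fin_cases j <;> fin_cases j' <;> simp [Prod.ext_iff] at h ⊢ <;> linarith [h.2]
    | right i' =>
      rw [lorentzGenerators_castAdd, lorentzGenerators_natAdd] at h
      fin_cases j <;> simp [Prod.ext_iff] at h
  | right i =>
    induction j' using Fin.addCases with
    | left j' =>
      rw [lorentzGenerators_natAdd, lorentzGenerators_castAdd] at h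
      have hcoord := congrArg (fun z => z.1 i) h
      fin_cases j' <;> simp [Prod.ext_iff] at h hcoord <;> simp [h] at hcoord
    | right i' =>
      rw [lorentzGenerators_natAdd, lorentzGenerators_natAdd] at h
      have hcoord := congrArg (fun z => z.1 i) h
      by_cases hii : i = i'
      · rw [hii]
      · simp [hii] at hcoord

theorem lorentzGenerators_hull_injective :
    Injective fun j => hull ℝ {lorentzGenerators p j} := by
  intro j j' h
  have hmem : lorentzGenerators p j ∈ hull ℝ {lorentzGenerators p j'} := h.le (subset_hull rfl)
  obtain ⟨a, ha, hj⟩ := mem_hull_singleton.1 hmem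
  exact eq_of_smul_lorentzGenerators_eq ha hj

end Faces

theorem stmt4_general (p : ℕ) :
    (1 < p →
      (extendedLorentzCone1 p =
        coneGen (Fin.append ![(onesVec p, (1:ℝ)), (onesVec p, (-1:ℝ))]
          (fun i : Fin p => (EuclideanSpace.single i (1:ℝ), (0:ℝ)))) ∧
      ∀ k : ℕ, k < p + 2 → ∀ w : Fin k → EuclideanSpace ℝ (Fin p) × ℝ,
        extendedLorentzCone1 p ≠ coneGen w)) ∧
    (p = 1 →
      extendedLorentzCone1 p = coneGen ![(onesVec p, (1:ℝ)), (onesVec p, (-1:ℝ))]) := by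
  refine ⟨fun hp => ⟨?_, fun k hk w hw => ?_⟩, ?_⟩
  · rw [coneGen_eq_hull, ← coe_lorentzCone]
    exact congrArg SetLike.coe (lorentzCone_eq_hull_lorentzGenerators p)
  · have hw' : hull ℝ (range w) = lorentzCone p := by
      apply SetLike.coe_injective
      rw [← coneGen_eq_hull, ← hw, coe_lorentzCone]
    have hcard := card_le_of_isFaceOf_hull_singleton lorentzGenerators_ne_zero
      (fun j => hw' ▸ isFaceOf_hull_lorentzGenerators hp j) lorentzGenerators_hull_injective
    rw [Fintype.card_fin] at hcard
    omega
  · rintro rfl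
    rw [coneGen_eq_hull, Matrix.range_cons_cons_empty, ← coe_lorentzCone,
      lorentzCone_one_eq_hull_pair]

/-- For `q = 1, p > 1`, the extended Lorentz cone is generated by the `p + 2`
vectors `(e,1), (e,−1), (e¹,0), …, (e^p,0)` and cannot be generated by fewer
than `p + 2` vectors; for `q = 1, p = 1` it is generated by `(1,1), (1,−1)`. -/
theorem stmt4 (p : ℕ) (hp : 0 < p) :
    (1 < p →
      (extendedLorentzCone1 p =
        coneGen (Fin.append ![(onesVec p, (1:ℝ)), (onesVec p, (-1:ℝ))]
          (fun i : Fin p => (EuclideanSpace.single i (1:ℝ), (0:ℝ)))) ∧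
      ∀ k : ℕ, k < p + 2 → ∀ w : Fin k → EuclideanSpace ℝ (Fin p) × ℝ,
        extendedLorentzCone1 p ≠ coneGen w)) ∧
    (p = 1 →
      extendedLorentzCone1 p = coneGen ![(onesVec p, (1:ℝ)), (onesVec p, (-1:ℝ))]) :=
  stmt4_general p
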